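/- Comparison principle: let x be a solution of the delayed consensus equation on [t₀,∞) and y a solution of the delayed consensus inequality on [t₀,∞) (with the same weights a_{ij} and delays h_{ij}), and suppose y(s) = x(s) for all s ∈ [t₀−h̄, t₀]. Then y_i(t) ≤ x_i(t) for every i ∈ [1:n] and every t ≥ t₀. -/

import Mathlib

/-!
The difference `z = y - x` is again a solution of the consensus inequality, with nonpositive
history, so it suffices to show that such a `z` stays nonpositive. This propagates forward in
steps of length `δ` with `n ā δ < 1`: if `z ≤ 0` up to `T` and `u > 0` is the largest value of the
`z_j` on `[T, T + δ]`, attained by `z_i` at `s`, let `σ` be the last time before `s` with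
`z_i(σ) ≤ 0`. On `(σ, s]` the term `-a_{ij} z_i` is nonpositive, so
`ż_i ≤ ∑_j a_{ij} z_j(t - h_{ij}) ≤ n ā u`, and `u = z_i(s) ≤ n ā u δ < u`.
-/

open MeasureTheory Set Filter intervalIntegral

noncomputable section

/-- Standing assumptions on the weight functions: measurable,
`0 ≤ a i j t ≤ ā` on `[0,∞)` and `a i i ≡ 0`. -/
def GoodWeights (n : ℕ) (abar : ℝ) (a : Fin n → Fin n → ℝ → ℝ) : Prop :=
  (∀ i j, Measurable (a i j)) ∧
  (∀ i j, ∀ t : ℝ, 0 ≤ t → 0 ≤ a i j t ∧ a i j t ≤ abar) ∧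
  (∀ i, ∀ t : ℝ, 0 ≤ t → a i i t = 0)

/-- Standing assumptions on the delay functions: measurable,
`0 ≤ h i j t ≤ h̄` on `[0,∞)` and `h i i ≡ 0`. -/
def GoodDelays (n : ℕ) (hbar : ℝ) (h : Fin n → Fin n → ℝ → ℝ) : Prop :=
  (∀ i j, Measurable (h i j)) ∧
  (∀ i j, ∀ t : ℝ, 0 ≤ t → 0 ≤ h i j t ∧ h i j t ≤ hbar) ∧
  (∀ i, ∀ t : ℝ, 0 ≤ t → h i i t = 0)

/-- `x` is bounded on every compact subset of `[t₀ - h̄, ∞)`. -/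
def LocBounded (n : ℕ) (t0 hbar : ℝ) (x : ℝ → Fin n → ℝ) : Prop :=
  ∀ T : ℝ, ∃ C : ℝ, ∀ i : Fin n, ∀ s ∈ Icc (t0 - hbar) T, |x s i| ≤ C

/-- `x` is a solution of the delayed consensus differential *inequality* on `[t₀,∞)`:
it is locally bounded on `[t₀ - h̄, ∞)`, absolutely continuous on `[t₀,∞)` with a.e.
derivative `D` (encoded via the integral representation with locally integrable `D`),
and `D` satisfies the consensus inequality almost everywhere on `[t₀,∞)`. -/
def IsSolIneq (n : ℕ) (a h : Fin n → Fin n → ℝ → ℝ) (hbar t0 : ℝ)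
    (x D : ℝ → Fin n → ℝ) : Prop :=
  LocBounded n t0 hbar x ∧
  (∀ i : Fin n, ∀ T : ℝ, IntegrableOn (fun s => D s i) (Icc t0 T)) ∧
  (∀ i : Fin n, ∀ t : ℝ, t0 ≤ t → x t i = x t0 i + ∫ s in t0..t, D s i) ∧
  (∀ᵐ t : ℝ ∂volume, t0 ≤ t → ∀ i : Fin n,
    D t i ≤ ∑ j : Fin n, a i j t * (x (t - h i j t) j - x t i))

/-- `x` is a solution of the delayed consensus *equation* on `[t₀,∞)`. -/
def IsSolEq (n : ℕ) (a h : Fin n → Fin n → ℝ → ℝ) (hbar t0 : ℝ)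
    (x D : ℝ → Fin n → ℝ) : Prop :=
  LocBounded n t0 hbar x ∧
  (∀ i : Fin n, ∀ T : ℝ, IntegrableOn (fun s => D s i) (Icc t0 T)) ∧
  (∀ i : Fin n, ∀ t : ℝ, t0 ≤ t → x t i = x t0 i + ∫ s in t0..t, D s i) ∧
  (∀ᵐ t : ℝ ∂volume, t0 ≤ t → ∀ i : Fin n,
    D t i = ∑ j : Fin n, a i j t * (x (t - h i j t) j - x t i))

/-- `Λ(t) = max_i sup_{s ∈ [t-h̄, t]} x_i(s)`. -/
def Lam (n : ℕ) (hbar : ℝ) (x : ℝ → Fin n → ℝ) (t : ℝ) : ℝ :=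
  ⨆ i : Fin n, sSup ((fun s => x s i) '' Icc (t - hbar) t)

/-- `λ(t) = min_i inf_{s ∈ [t-h̄, t]} x_i(s)`. -/
def lam (n : ℕ) (hbar : ℝ) (x : ℝ → Fin n → ℝ) (t : ℝ) : ℝ :=
  ⨅ i : Fin n, sInf ((fun s => x s i) '' Icc (t - hbar) t)

/-- Non-instantaneous type-symmetry of the weight matrix with sequence `tp` and
constant `K` (Definition 1). -/
def NonInstTypeSymm (n : ℕ) (a : Fin n → Fin n → ℝ → ℝ) (tp : ℕ → ℝ) (K : ℝ) : Prop :=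
  tp 0 = 0 ∧ StrictMono tp ∧ Tendsto tp atTop atTop ∧ 1 ≤ K ∧
  ∀ p : ℕ, ∀ i j : Fin n,
    K⁻¹ * ∫ t in tp p..tp (p + 1), a j i t ≤ (∫ t in tp p..tp (p + 1), a i j t) ∧
    (∫ t in tp p..tp (p + 1), a i j t) ≤ K * ∫ t in tp p..tp (p + 1), a j i t

/-- The persistent graph `G_∞`, whose arcs are the pairs `(j,i)` with
`∫_0^∞ a_{ij} = ∞` (i.e. `a i j` is not integrable on `[0,∞)`), is connected:
the symmetric reflexive-transitive closure of the arc relation relates any two nodes. -/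
def PersGraphConnected (n : ℕ) (a : Fin n → Fin n → ℝ → ℝ) : Prop :=
  ∀ u v : Fin n, Relation.ReflTransGen
    (fun p q => ¬ IntegrableOn (a q p) (Ici 0) ∨ ¬ IntegrableOn (a p q) (Ici 0)) u v

/-- The weight matrix is repeatedly strongly connected with sequence `tp` and
constant `ε` (Definition 2): on each `[t_p, t_{p+1}]`, the graph whose arcs `(j,i)`
satisfy `∫_{t_p}^{t_{p+1}} a_{ij} ≥ ε` is strongly connected. -/
def RepeatedlyStronglyConnected (n : ℕ) (a : Fin n → Fin n → ℝ → ℝ)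
    (tp : ℕ → ℝ) (ε : ℝ) : Prop :=
  tp 0 = 0 ∧ StrictMono tp ∧ Tendsto tp atTop atTop ∧ 0 < ε ∧
  ∀ p : ℕ, ∀ u v : Fin n, Relation.ReflTransGen
    (fun i j => ε ≤ ∫ t in tp p..tp (p + 1), a j i t) u v

/-- The quantity `M = sup_{i,j,p} ∫_{t_p}^{t_{p+1}} a_{ij}` is finite, bounded by `M`. -/
def MBound (n : ℕ) (a : Fin n → Fin n → ℝ → ℝ) (tp : ℕ → ℝ) (M : ℝ) : Prop :=
  ∀ p : ℕ, ∀ i j : Fin n, (∫ t in tp p..tp (p + 1), a i j t) ≤ M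

end

theorem Finset.sum_mul_sub_le_card_mul {ι : Type*} (s : Finset ι) {w v : ι → ℝ} {c u b : ℝ}
    (hc : 0 ≤ c) (hu : 0 ≤ u) (hw : ∀ j ∈ s, 0 ≤ w j ∧ w j ≤ b) (hv : ∀ j ∈ s, v j ≤ u) :
    ∑ j ∈ s, w j * (v j - c) ≤ s.card * (b * u) := by
  rw [← nsmul_eq_mul, ← Finset.sum_const]
  refine Finset.sum_le_sum fun j hj => ?_
  obtain ⟨hw0, hwb⟩ := hw j hj
  calc w j * (v j - c) ≤ w j * u := mul_le_mul_of_nonneg_left (by linarith [hv j hj]) hw0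
    _ ≤ b * u := mul_le_mul_of_nonneg_right hwb hu

theorem ContinuousOn.exists_last_nonpos {f : ℝ → ℝ} {a b : ℝ} (hab : a ≤ b)
    (hf : ContinuousOn f (Icc a b)) (ha : f a ≤ 0) :
    ∃ σ ∈ Icc a b, f σ ≤ 0 ∧ ∀ s ∈ Ioc σ b, 0 < f s := by
  set S := Icc a b ∩ f ⁻¹' Iic 0
  have hS : IsClosed S := hf.preimage_isClosed_of_isClosed isClosed_Icc isClosed_Iic
  have hbdd : BddAbove S := ⟨b, fun s hs => hs.1.2⟩
  obtain ⟨hσ, hfσ⟩ : sSup S ∈ S := hS.csSup_mem ⟨a, ⟨le_rfl, hab⟩, ha⟩ hbdd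
  refine ⟨sSup S, hσ, hfσ, fun s hs => not_le.1 fun hfs => ?_⟩
  exact (le_csSup hbdd ⟨⟨hσ.1.trans hs.1.le, hs.2⟩, hfs⟩).not_gt hs.1

theorem IsCompact.exists_forall_le_of_finite_family {α ι : Type*} [TopologicalSpace α]
    [Finite ι] [Nonempty ι] {K : Set α} (hK : IsCompact K) (hne : K.Nonempty) {f : α → ι → ℝ}
    (hf : ∀ i, ContinuousOn (fun s => f s i) K) :
    ∃ i, ∃ s ∈ K, ∀ j, ∀ r ∈ K, f r j ≤ f s i := by
  choose s hsK hmax using fun i => hK.exists_isMaxOn hne (hf i)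
  obtain ⟨i, hi⟩ := Finite.exists_max fun i => f (s i) i
  exact ⟨i, s i, hsK i, fun j r hr => (hmax j hr).trans (hi j)⟩

theorem intervalIntegral.integral_le_mul_sub_of_ae_le {f : ℝ → ℝ} {a b c : ℝ} (hab : a ≤ b)
    (hf : IntervalIntegrable f volume a b) (h : ∀ᵐ s, s ∈ Ioc a b → f s ≤ c) :
    ∫ s in a..b, f s ≤ c * (b - a) := by
  rw [intervalIntegral.integral_of_le hab]
  calc ∫ s in Ioc a b, f s ≤ ∫ _ in Ioc a b, c :=
        setIntegral_mono_ae_restrict hf.1 (integrableOn_const measure_Ioc_lt_top.ne)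
          ((ae_restrict_iff' measurableSet_Ioc).2 h)
    _ = c * (b - a) := by
        rw [setIntegral_const, Real.volume_real_Ioc_of_le hab, smul_eq_mul, mul_comm]

theorem intervalIntegrable_of_forall_integrableOn_Icc {f : ℝ → ℝ} {t0 σ τ : ℝ}
    (hf : ∀ T, IntegrableOn f (Icc t0 T)) (hσ : t0 ≤ σ) (hτ : t0 ≤ τ) :
    IntervalIntegrable f volume σ τ :=
  ((hf (max σ τ)).mono_set
    (uIcc_subset_Icc ⟨hσ, le_max_left σ τ⟩ ⟨hτ, le_max_right σ τ⟩)).intervalIntegrable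

namespace IsSolIneq

variable {n : ℕ} {a h : Fin n → Fin n → ℝ → ℝ} {abar hbar t0 : ℝ} {x D : ℝ → Fin n → ℝ}

theorem intervalIntegrable (hx : IsSolIneq n a h hbar t0 x D) (i : Fin n) {σ τ : ℝ}
    (hσ : t0 ≤ σ) (hτ : t0 ≤ τ) : IntervalIntegrable (fun s => D s i) volume σ τ :=
  intervalIntegrable_of_forall_integrableOn_Icc (hx.2.1 i) hσ hτ

theorem eq_add_integral (hx : IsSolIneq n a h hbar t0 x D) (i : Fin n) {σ t : ℝ}
    (hσ : t0 ≤ σ) (hσt : σ ≤ t) : x t i = x σ i + ∫ s in σ..t, D s i := by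
  rw [hx.2.2.1 i t (hσ.trans hσt), hx.2.2.1 i σ hσ, add_assoc,
    integral_add_adjacent_intervals (hx.intervalIntegrable i le_rfl hσ)
      (hx.intervalIntegrable i hσ (hσ.trans hσt))]

theorem continuousOn (hx : IsSolIneq n a h hbar t0 x D) (i : Fin n) {T : ℝ} (hT : t0 ≤ T) :
    ContinuousOn (fun t => x t i) (Icc t0 T) := by
  have hprim := continuousOn_primitive_interval' (hx.intervalIntegrable i le_rfl hT)
    left_mem_uIcc
  rw [uIcc_of_le hT] at hprim
  exact (continuousOn_const.add hprim).congr fun t ht => hx.2.2.1 i t ht.1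

theorem sub_isSolEq {y Dy : ℝ → Fin n → ℝ} (hy : IsSolIneq n a h hbar t0 y Dy)
    (hx : IsSolEq n a h hbar t0 x D) : IsSolIneq n a h hbar t0 (y - x) (Dy - D) := by
  obtain ⟨hyb, hyi, hyr, hyo⟩ := hy
  obtain ⟨hxb, hxi, hxr, hxo⟩ := hx
  refine ⟨fun T => ?_, fun i T => (hyi i T).sub (hxi i T), fun i t ht => ?_, ?_⟩
  · obtain ⟨Cy, hCy⟩ := hyb T
    obtain ⟨Cx, hCx⟩ := hxb T
    exact ⟨Cy + Cx, fun i s hs => (abs_sub _ _).trans (add_le_add (hCy i s hs) (hCx i s hs))⟩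
  · simp only [Pi.sub_apply]
    rw [hyr i t ht, hxr i t ht, integral_sub (intervalIntegrable_of_forall_integrableOn_Icc
      (hyi i) le_rfl ht) (intervalIntegrable_of_forall_integrableOn_Icc (hxi i) le_rfl ht)]
    ring
  · filter_upwards [hyo, hxo] with t hyt hxt ht i
    simp only [Pi.sub_apply, hxt ht i]
    calc Dy t i - ∑ j, a i j t * (x (t - h i j t) j - x t i)
        ≤ ∑ j, a i j t * (y (t - h i j t) j - y t i) - ∑ j, a i j t * (x (t - h i j t) j - x t i) :=
          sub_le_sub_right (hyt ht i) _
      _ = ∑ j, a i j t * (y (t - h i j t) j - x (t - h i j t) j - (y t i - x t i)) := by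
          rw [← Finset.sum_sub_distrib]
          exact Finset.sum_congr rfl fun j _ => by ring

theorem nonpos_on_Icc_add_of_nonpos (hx : IsSolIneq n a h hbar t0 x D)
    (ha : ∀ i j t, t0 ≤ t → 0 ≤ a i j t ∧ a i j t ≤ abar)
    (hh : ∀ i j t, t0 ≤ t → 0 ≤ h i j t ∧ h i j t ≤ hbar)
    (habar : 0 ≤ abar) (hhbar : 0 ≤ hbar) {δ T : ℝ} (hδ : n * abar * δ < 1) (hT : t0 ≤ T)
    (hprev : ∀ s ∈ Icc (t0 - hbar) T, ∀ j, x s j ≤ 0) :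
    ∀ t ∈ Icc T (T + δ), ∀ i, x t i ≤ 0 := by
  by_contra! hpos
  obtain ⟨t₁, ht₁, i₁, hpos⟩ := hpos
  have hTδ : T ≤ T + δ := ht₁.1.trans ht₁.2
  have hcont : ∀ j, ContinuousOn (fun s => x s j) (Icc T (T + δ)) := fun j =>
    (hx.continuousOn j (hT.trans hTδ)).mono (Icc_subset_Icc_left hT)
  have : Nonempty (Fin n) := ⟨i₁⟩
  obtain ⟨i, s, hs, hmax⟩ :=
    isCompact_Icc.exists_forall_le_of_finite_family ⟨T, left_mem_Icc.2 hTδ⟩ hcont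
  set u := x s i
  have hu : 0 < u := hpos.trans_le (hmax i₁ t₁ ht₁)
  have hle_u : ∀ r ∈ Icc (t0 - hbar) (T + δ), ∀ j, x r j ≤ u := by
    intro r hr j
    rcases le_or_gt r T with hrT | hrT
    · exact (hprev r ⟨hr.1, hrT⟩ j).trans hu.le
    · exact hmax j r ⟨hrT.le, hr.2⟩
  obtain ⟨σ, hσ, hxσ, hposσ⟩ := ((hcont i).mono (Icc_subset_Icc_right hs.2)).exists_last_nonpos
    hs.1 (hprev T ⟨by linarith, le_rfl⟩ i)
  have hdrift : ∀ᵐ r, r ∈ Ioc σ s → D r i ≤ n * (abar * u) := by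
    filter_upwards [hx.2.2.2] with r hr hrσ
    have hr0 : t0 ≤ r := hT.trans (hσ.1.trans hrσ.1.le)
    refine (hr hr0 i).trans ?_
    simpa using Finset.univ.sum_mul_sub_le_card_mul (hposσ r hrσ).le hu.le
      (fun j _ => ha i j r hr0) fun j _ => hle_u _
        ⟨by linarith [(hh i j r hr0).2], by linarith [(hh i j r hr0).1, hrσ.2, hs.2]⟩ j
  have hgrowth : u ≤ n * (abar * u) * (s - σ) := by
    calc u = x σ i + ∫ r in σ..s, D r i := hx.eq_add_integral i (hT.trans hσ.1) hσ.2
      _ ≤ 0 + n * (abar * u) * (s - σ) := add_le_add hxσ <|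
          intervalIntegral.integral_le_mul_sub_of_ae_le hσ.2
            (hx.intervalIntegrable i (hT.trans hσ.1) (hT.trans hs.1)) hdrift
      _ = n * (abar * u) * (s - σ) := zero_add _
  have hstep : n * (abar * u) * (s - σ) ≤ n * abar * δ * u := by
    have : s - σ ≤ δ := by linarith [hs.2, hσ.1]
    calc n * (abar * u) * (s - σ) ≤ n * (abar * u) * δ := by gcongr
      _ = n * abar * δ * u := by ring
  exact (hgrowth.trans hstep).not_gt (mul_lt_of_lt_one_left hu hδ)

theorem nonpos_of_nonpos_on_history (hx : IsSolIneq n a h hbar t0 x D)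
    (ha : ∀ i j t, t0 ≤ t → 0 ≤ a i j t ∧ a i j t ≤ abar)
    (hh : ∀ i j t, t0 ≤ t → 0 ≤ h i j t ∧ h i j t ≤ hbar)
    (habar : 0 ≤ abar) (hhbar : 0 ≤ hbar) (hinit : ∀ s ∈ Icc (t0 - hbar) t0, ∀ i, x s i ≤ 0) :
    ∀ i, ∀ t, t0 ≤ t → x t i ≤ 0 := by
  set δ : ℝ := 1 / (n * abar + 1)
  have hδ : 0 < δ := by positivity
  have hδlt : n * abar * δ < 1 := by
    rw [mul_one_div, div_lt_one (by positivity)]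
    exact lt_add_one _
  have hsteps : ∀ k : ℕ, ∀ s ∈ Icc (t0 - hbar) (t0 + k * δ), ∀ i, x s i ≤ 0 := by
    intro k
    induction k with
    | zero => simpa using hinit
    | succ k ih =>
      intro s hs
      rcases le_or_gt s (t0 + k * δ) with hsk | hsk
      · exact ih s ⟨hs.1, hsk⟩
      · refine hx.nonpos_on_Icc_add_of_nonpos ha hh habar hhbar hδlt ?_ ih s ⟨hsk.le, ?_⟩
        · have : (0 : ℝ) ≤ k * δ := by positivity
          linarith
        · push_cast at hs
          linarith [hs.2]
  intro i t ht
  obtain ⟨k, hk⟩ := exists_nat_ge ((t - t0) / δ)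
  rw [div_le_iff₀ hδ] at hk
  exact hsteps k t ⟨by linarith, by linarith⟩ i

end IsSolIneq

theorem stmt14_general (n : ℕ) (abar hbar : ℝ) (habar : 0 ≤ abar) (hhbar : 0 ≤ hbar)
    (a h : Fin n → Fin n → ℝ → ℝ)
    (ha : GoodWeights n abar a) (hh : GoodDelays n hbar h)
    (t0 : ℝ) (ht0 : 0 ≤ t0)
    (x Dx y Dy : ℝ → Fin n → ℝ)
    (hx : IsSolEq n a h hbar t0 x Dx)
    (hy : IsSolIneq n a h hbar t0 y Dy)
    (hinit : ∀ s ∈ Icc (t0 - hbar) t0, ∀ i : Fin n, y s i = x s i) :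
    ∀ i : Fin n, ∀ t : ℝ, t0 ≤ t → y t i ≤ x t i := by
  obtain ⟨-, ha, -⟩ := ha
  obtain ⟨-, hh, -⟩ := hh
  have hz := (hy.sub_isSolEq hx).nonpos_of_nonpos_on_history
    (fun i j t ht => ha i j t (ht0.trans ht)) (fun i j t ht => hh i j t (ht0.trans ht))
    habar hhbar fun s hs i => by simp [hinit s hs i]
  intro i t ht
  simpa [sub_nonpos] using hz i t ht

theorem stmt14 (n : ℕ) (hn : 1 ≤ n) (abar hbar : ℝ) (habar : 0 ≤ abar) (hhbar : 0 ≤ hbar)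
    (a h : Fin n → Fin n → ℝ → ℝ)
    (ha : GoodWeights n abar a) (hh : GoodDelays n hbar h)
    (t0 : ℝ) (ht0 : 0 ≤ t0)
    (x Dx y Dy : ℝ → Fin n → ℝ)
    (hx : IsSolEq n a h hbar t0 x Dx)
    (hy : IsSolIneq n a h hbar t0 y Dy)
    (hinit : ∀ s ∈ Icc (t0 - hbar) t0, ∀ i : Fin n, y s i = x s i) :
    ∀ i : Fin n, ∀ t : ℝ, t0 ≤ t → y t i ≤ x t i :=
  stmt14_general n abar hbar habar hhbar a h ha hh t0 ht0 x Dx y Dy hx hy hinit
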